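/- Let E⁺, E⁻ be finite subsets of ℝ^d satisfying the degree-m moment intersection condition: there exist α_x ≥ 0 with ∑_{E⁺} α_x = ∑_{E⁻} α_x = 1 and ∑_{x∈E⁺} α_x x^e = ∑_{x∈E⁻} α_x x^e for all |e| ≤ m, with all α_x > 0. If a hyperplane H = {x : ⟨u,x⟩ = a} contains all points of E⁺ ∪ E⁻ except possibly points on one side, and exactly the points of (E⁺ ∪ E⁻) ∩ H are removed, then either all remaining coefficients vanish on one side, or the sign-adjusted reduced sets satisfy the degree-(m−1) moment intersection condition. -/

import Mathlib

/-!
The weights `w` whose moments on `E` and on `F` agree up to degree `m` form a submodule, and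
multiplying such a weight by an affine function `σ` gives a weight whose moments agree up to degree
`m - 1`, since `σ · x^e` is a combination of monomials of degree at most `|e| + 1`. If `σ ≥ 0` on
`E ∪ F`, the weight `α σ` is positive exactly off the hyperplane `σ = 0` and vanishes on it, so
its moments still agree after the points of the hyperplane are removed; dividing by its total mass
(equal on both sides by the degree-`0` moment) gives the new coefficients. The case `σ ≤ 0` is the
case `-σ ≥ 0` with the roles of `E⁺` and `E⁻` exchanged, which is exactly the sign adjustment.
-/

open Finset

section Moments

variable {ι R : Type*} [Fintype ι] [CommRing R]

theorem prod_pow_add_single [DecidableEq ι] (x : ι → R) (e : ι → ℕ) (i : ι) :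
    ∏ j, x j ^ (e + Pi.single i 1 : ι → ℕ) j = x i * ∏ j, x j ^ e j := by
  simp only [Pi.add_apply, pow_add, prod_mul_distrib, Pi.single_apply, pow_ite, pow_one, pow_zero,
    prod_ite_eq', mem_univ, if_true, mul_comm]

theorem sum_add_single [DecidableEq ι] (e : ι → ℕ) (i : ι) :
    ∑ j, (e + Pi.single i 1 : ι → ℕ) j = ∑ j, e j + 1 := by
  simp [sum_add_distrib]

def momentMatchingWeights (m : ℕ) (E F : Finset (ι → R)) : Submodule R ((ι → R) → R) where
  carrier := {w | ∀ e : ι → ℕ, ∑ i, e i ≤ m →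
    ∑ x ∈ E, w x * ∏ i, x i ^ e i = ∑ x ∈ F, w x * ∏ i, x i ^ e i}
  add_mem' hv hw e he := by
    simp only [Pi.add_apply, add_mul, sum_add_distrib, hv e he, hw e he]
  zero_mem' _ _ := by simp
  smul_mem' c w hw e he := by
    simp only [Pi.smul_apply, smul_eq_mul, mul_assoc, ← mul_sum, hw e he]

variable {m : ℕ} {E F : Finset (ι → R)} {w : (ι → R) → R}

theorem momentMatchingWeights_comm :
    momentMatchingWeights m E F = momentMatchingWeights m F E := by
  ext w
  exact forall₂_congr fun e he => eq_comm

theorem momentMatchingWeights_antitone : Antitone fun m => momentMatchingWeights m E F :=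
  fun _ _ hmn _ hw e he => hw e (he.trans hmn)

theorem mul_coord_mem_momentMatchingWeights (hw : w ∈ momentMatchingWeights (m + 1) E F)
    (i : ι) : (fun x => w x * x i) ∈ momentMatchingWeights m E F := by
  classical
  intro e he
  have := hw (e + Pi.single i 1) (by rw [sum_add_single]; omega)
  simpa only [prod_pow_add_single, mul_assoc] using this

theorem mul_affine_mem_momentMatchingWeights (hw : w ∈ momentMatchingWeights (m + 1) E F)
    (u : ι → R) (a : R) :
    (fun x => w x * (∑ i, u i * x i - a)) ∈ momentMatchingWeights m E F := by
  have hdecomp : (fun x => w x * (∑ i, u i * x i - a))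
      = ∑ i, u i • (fun x => w x * x i) - a • w := by
    ext x
    simp only [Pi.sub_apply, Finset.sum_apply, Pi.smul_apply, smul_eq_mul, mul_sub, mul_sum]
    ring_nf
  rw [hdecomp]
  exact sub_mem
    (sum_mem fun i _ => Submodule.smul_mem _ _ (mul_coord_mem_momentMatchingWeights hw i))
    (Submodule.smul_mem _ _ (momentMatchingWeights_antitone m.le_succ hw))

theorem filter_mem_momentMatchingWeights [DecidableEq (ι → R)] (p : (ι → R) → Prop)
    [DecidablePred p] (hw : w ∈ momentMatchingWeights m E F) (hp : ∀ x ∈ E ∪ F, ¬ p x → w x = 0) :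
    w ∈ momentMatchingWeights m (E.filter p) (F.filter p) := by
  intro e he
  have hrestrict : ∀ G ⊆ E ∪ F,
      ∑ x ∈ G.filter p, w x * ∏ i, x i ^ e i = ∑ x ∈ G, w x * ∏ i, x i ^ e i := fun G hG =>
    sum_filter_of_ne fun x hx hne => by_contra fun hpx => hne (by rw [hp x (hG hx) hpx, zero_mul])
  rw [hrestrict E subset_union_left, hrestrict F subset_union_right]
  exact hw e he

end Moments

section SignReduced

variable {X 𝕜 : Type*} [DecidableEq X] (σ : X → 𝕜)

def signReduced [Zero 𝕜] [LT 𝕜] [DecidableLT 𝕜] (E F : Finset X) : Finset X :=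
  E.filter (fun x => 0 < σ x) ∪ F.filter (fun x => σ x < 0)

theorem signReduced_neg [AddCommGroup 𝕜] [LinearOrder 𝕜] [IsOrderedAddMonoid 𝕜] (E F : Finset X) :
    signReduced (-σ) E F = signReduced σ F E := by
  simp only [signReduced, Pi.neg_apply, neg_pos, neg_lt_zero]
  exact union_comm _ _

theorem signReduced_of_nonneg [Zero 𝕜] [LinearOrder 𝕜] {E F : Finset X}
    (hF : ∀ x ∈ F, 0 ≤ σ x) :
    signReduced σ E F = E.filter (fun x => 0 < σ x) := by
  rw [signReduced, filter_false_of_mem fun x hx => (hF x hx).not_gt, union_empty]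

end SignReduced

section Intersection

variable {ι 𝕜 : Type*} [Fintype ι] [Field 𝕜] [LinearOrder 𝕜] [DecidableEq (ι → 𝕜)]
  {m : ℕ} {E F : Finset (ι → 𝕜)}

def MomentIntersection (m : ℕ) (E F : Finset (ι → 𝕜)) : Prop :=
  ∃ β : (ι → 𝕜) → 𝕜, (∀ x ∈ E ∪ F, 0 ≤ β x) ∧ (∑ x ∈ E, β x = 1) ∧ (∑ x ∈ F, β x = 1) ∧
    β ∈ momentMatchingWeights m E F

theorem MomentIntersection.of_pos [IsStrictOrderedRing 𝕜] {w : (ι → 𝕜) → 𝕜}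
    (hw : ∀ x ∈ E ∪ F, 0 < w x) (hmom : w ∈ momentMatchingWeights m E F) (hE : E.Nonempty) :
    MomentIntersection m E F := by
  set S := ∑ x ∈ E, w x
  have hS : 0 < S := sum_pos (fun x hx => hw x (mem_union_left F hx)) hE
  have hmass : ∑ x ∈ F, w x = S := by
    simpa using (hmom 0 (by simp)).symm
  refine ⟨fun x => S⁻¹ * w x, fun x hx => by positivity [(hw x hx).le], ?_, ?_,
    Submodule.smul_mem _ S⁻¹ hmom⟩
  · rw [← mul_sum, inv_mul_cancel₀ hS.ne']
  · rw [← mul_sum, hmass, inv_mul_cancel₀ hS.ne']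

theorem signReduced_eq_empty_or_momentIntersection [IsStrictOrderedRing 𝕜] {α σ : (ι → 𝕜) → 𝕜}
    (u : ι → 𝕜) (a : 𝕜) (hα : ∀ x ∈ E ∪ F, 0 < α x) (hmom : α ∈ momentMatchingWeights (m + 1) E F)
    (hσ : ∀ x, σ x = ∑ i, u i * x i - a) (hside : ∀ x ∈ E ∪ F, 0 ≤ σ x) :
    (signReduced σ E F = ∅ ∨ signReduced σ F E = ∅) ∨
      MomentIntersection m (signReduced σ E F) (signReduced σ F E) := by
  rw [signReduced_of_nonneg σ fun x hx => hside x (mem_union_right E hx),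
    signReduced_of_nonneg σ fun x hx => hside x (mem_union_left F hx)]
  rcases (E.filter fun x => 0 < σ x).eq_empty_or_nonempty with hE | hE
  · exact Or.inl (Or.inl hE)
  refine Or.inr (MomentIntersection.of_pos (w := fun x => α x * σ x) ?_ ?_ hE)
  · intro x hx
    rw [← filter_union, mem_filter] at hx
    exact mul_pos (hα x hx.1) hx.2
  · refine filter_mem_momentMatchingWeights _ ?_ fun x hx hσx => ?_
    · simpa only [hσ] using mul_affine_mem_momentMatchingWeights hmom u a
    · rw [le_antisymm (not_lt.1 hσx) (hside x hx), mul_zero]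

end Intersection

open scoped Classical in
theorem stmt_17_general (d m : ℕ) (hm : 1 ≤ m) (Ep Em : Finset (Fin d → ℝ))
    (α : (Fin d → ℝ) → ℝ) (hαpos : ∀ x ∈ Ep ∪ Em, 0 < α x)
    (hmom : ∀ e : Fin d → ℕ, ∑ i, e i ≤ m →
      ∑ x ∈ Ep, α x * ∏ i, x i ^ e i = ∑ x ∈ Em, α x * ∏ i, x i ^ e i)
    (u : Fin d → ℝ) (a : ℝ) (σ : (Fin d → ℝ) → ℝ)
    (hσ : ∀ x, σ x = (∑ i, u i * x i) - a)
    (hside : (∀ x ∈ Ep ∪ Em, 0 ≤ σ x) ∨ ∀ x ∈ Ep ∪ Em, σ x ≤ 0)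
    (Etp Etm : Finset (Fin d → ℝ))
    (hEtp : Etp = Ep.filter (fun x => 0 < σ x) ∪ Em.filter (fun x => σ x < 0))
    (hEtm : Etm = Em.filter (fun x => 0 < σ x) ∪ Ep.filter (fun x => σ x < 0)) :
    (Etp = ∅ ∨ Etm = ∅) ∨
      ∃ β : (Fin d → ℝ) → ℝ, (∀ x ∈ Etp ∪ Etm, 0 ≤ β x) ∧
        (∑ x ∈ Etp, β x = 1) ∧ (∑ x ∈ Etm, β x = 1) ∧
        ∀ e : Fin d → ℕ, ∑ i, e i ≤ m - 1 →
          ∑ x ∈ Etp, β x * ∏ i, x i ^ e i = ∑ x ∈ Etm, β x * ∏ i, x i ^ e i := by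
  obtain ⟨k, rfl⟩ : ∃ k, m = k + 1 := ⟨m - 1, by omega⟩
  change α ∈ momentMatchingWeights (k + 1) Ep Em at hmom
  subst hEtp hEtm
  change (signReduced σ Ep Em = ∅ ∨ signReduced σ Em Ep = ∅) ∨
    MomentIntersection k (signReduced σ Ep Em) (signReduced σ Em Ep)
  rcases hside with hside | hside
  · exact signReduced_eq_empty_or_momentIntersection u a hαpos hmom hσ hside
  · have hσneg : ∀ x, (-σ) x = ∑ i, (-u) i * x i - -a := fun x => by
      simp only [Pi.neg_apply, hσ, neg_mul, sum_neg_distrib, neg_sub_neg, neg_sub]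
    have := signReduced_eq_empty_or_momentIntersection (-u) (-a) (union_comm Ep Em ▸ hαpos)
      (by rwa [momentMatchingWeights_comm]) hσneg
      fun x hx => neg_nonneg.2 (hside x (union_comm Em Ep ▸ hx))
    rwa [signReduced_neg, signReduced_neg] at this

open scoped Classical in
theorem stmt_17 (d m : ℕ) (hm : 1 ≤ m) (Ep Em : Finset (Fin d → ℝ))
    (α : (Fin d → ℝ) → ℝ) (hαpos : ∀ x ∈ Ep ∪ Em, 0 < α x)
    (hαp : ∑ x ∈ Ep, α x = 1) (hαm : ∑ x ∈ Em, α x = 1)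
    (hmom : ∀ e : Fin d → ℕ, ∑ i, e i ≤ m →
      ∑ x ∈ Ep, α x * ∏ i, x i ^ e i = ∑ x ∈ Em, α x * ∏ i, x i ^ e i)
    (u : Fin d → ℝ) (a : ℝ) (σ : (Fin d → ℝ) → ℝ)
    (hσ : ∀ x, σ x = (∑ i, u i * x i) - a)
    (hside : (∀ x ∈ Ep ∪ Em, 0 ≤ σ x) ∨ ∀ x ∈ Ep ∪ Em, σ x ≤ 0)
    (Etp Etm : Finset (Fin d → ℝ))
    (hEtp : Etp = Ep.filter (fun x => 0 < σ x) ∪ Em.filter (fun x => σ x < 0))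
    (hEtm : Etm = Em.filter (fun x => 0 < σ x) ∪ Ep.filter (fun x => σ x < 0)) :
    (Etp = ∅ ∨ Etm = ∅) ∨
      ∃ β : (Fin d → ℝ) → ℝ, (∀ x ∈ Etp ∪ Etm, 0 ≤ β x) ∧
        (∑ x ∈ Etp, β x = 1) ∧ (∑ x ∈ Etm, β x = 1) ∧
        ∀ e : Fin d → ℕ, ∑ i, e i ≤ m - 1 →
          ∑ x ∈ Etp, β x * ∏ i, x i ^ e i = ∑ x ∈ Etm, β x * ∏ i, x i ^ e i :=
  stmt_17_general d m hm Ep Em α hαpos hmom u a σ hσ hside Etp Etm hEtp hEtm
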